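/- arXiv:1901.00696 — 4 statements merged into one kernel-verified Lean document; each statement's English description precedes it below -/
import Mathlib

section
/- Let n, m, d be positive integers, let f : ℝⁿ × ℝᵈ → ℝⁿ and h : ℝⁿ × ℝᵈ → ℝᵐ be differentiable in their first argument, let R be an m×m real symmetric positive definite matrix, let (u_t)_{t≥1} be a sequence in ℝᵈ, (y_t)_{t≥1} a sequence in ℝᵐ, (α_t)_{t≥1} nonnegative reals, and (η_t)_{t≥0} reals with 0 < η_t < 1 and 1/η_t = 1/((1+α_t)η_{t−1}) + 1 for all t ≥ 1. Fix s₀ ∈ ℝⁿ and an n×n symmetric positive definite matrix P₀, and define the pure fading-memory extended Kalman filter sequences by: s_{t|t−1} := f(s_{t−1}, u_t); F_{t−1} := the Jacobian of f in its first argument at (s_{t−1}, u_t); P_{t|t−1} := (1+α_t) F_{t−1} P_{t−1} F_{t−1}ᵀ; ŷ_t := h(s_{t|t−1}, u_t); H_t := the Jacobian of h in its first argument at (s_{t|t−1}, u_t); K_t := P_{t|t−1} H_tᵀ (H_t P_{t|t−1} H_tᵀ + R)⁻¹; P_t := (I − K_t H_t) P_{t|t−1}; s_t := s_{t|t−1}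 + K_t (y_t − ŷ_t). Define the online natural gradient sequences by σ₀ := s₀, J₀ := η₀ P₀⁻¹, and for t ≥ 1: σ_{t|t−1} := f(σ_{t−1}, u_t); Φ_{t−1} := the Jacobian of f in its first argument at (σ_{t−1}, u_t); J'_t := (Φ_{t−1}⁻¹)ᵀ J_{t−1} Φ_{t−1}⁻¹; H̃_t := the Jacobian of h in its first argument at (σ_{t|t−1}, u_t); J_t := (1−η_t) J'_t + η_t H̃_tᵀ R⁻¹ H̃_t; σ_t := σ_{t|t−1} + η_t J_t⁻¹ H̃_tᵀ R⁻¹ (y_t − h(σ_{t|t−1}, u_t)). Assume each Jacobian F_{t−1} is invertible. Then for all t ≥ 0: σ_t = s_t, the matrices P_t and J_t are symmetric positive definite (hence invertible), and P_t = η_t J_t⁻¹. -/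
/-!
Both recursions are compared in information form. By the Woodbury identity the EKF update is
`P_t⁻¹ = P_{t|t-1}⁻¹ + HᵀR⁻¹H` with gain `K_t = P_t Hᵀ R⁻¹`. On the natural-gradient side,
transporting `J_{t-1} = η_{t-1} P_{t-1}⁻¹` through the chart change `F` gives
`η_{t-1} (F P_{t-1} Fᵀ)⁻¹`, and the recursion for `η` turns the weight `(1 - η_t) η_{t-1}` into
`η_t / (1 + α_t)`, so that `J_t = η_t P_t⁻¹`. The invariant `σ_t = s_t`, `P_t > 0`,
`J_t = η_t P_t⁻¹` then propagates by induction.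
-/

open Matrix

/-- The Jacobian matrix of a map `g : ℝⁿ → ℝᵐ` at a point `x`. -/
noncomputable def jacobian {n m : ℕ} (g : (Fin n → ℝ) → (Fin m → ℝ)) (x : Fin n → ℝ) :
    Matrix (Fin m) (Fin n) ℝ :=
  LinearMap.toMatrix' (fderiv ℝ g x).toLinearMap

namespace Matrix

section CommRing

variable {K : Type*} [CommRing K] {ι κ : Type*} [Fintype ι] [Fintype κ] [DecidableEq ι]
  [DecidableEq κ]

theorem transpose_inv_mul_inv_mul_inv (F P : Matrix ι ι K) :
    (F⁻¹)ᵀ * P⁻¹ * F⁻¹ = (F * P * Fᵀ)⁻¹ := by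
  rw [mul_inv_rev, mul_inv_rev, ← transpose_nonsing_inv, Matrix.mul_assoc]

theorem one_sub_mul_inv_mul_mul_eq_inv_add {P : Matrix ι ι K} {R : Matrix κ κ K}
    (G : Matrix ι κ K) (H : Matrix κ ι K) (hP : IsUnit P) (hR : IsUnit R)
    (hS : IsUnit (H * P * G + R)) :
    (1 - P * G * (H * P * G + R)⁻¹ * H) * P = (P⁻¹ + G * R⁻¹ * H)⁻¹ := by
  have hPd := (isUnit_iff_isUnit_det P).mp hP
  have hRd := (isUnit_iff_isUnit_det R).mp hR
  rw [add_mul_mul_inv_eq_sub _ _ _ _ (isUnit_nonsing_inv_iff.mpr hP)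
      (isUnit_nonsing_inv_iff.mpr hR)
      (by rwa [nonsing_inv_nonsing_inv _ hPd, nonsing_inv_nonsing_inv _ hRd, add_comm]),
    nonsing_inv_nonsing_inv _ hPd, nonsing_inv_nonsing_inv _ hRd, add_comm R, Matrix.sub_mul,
    Matrix.one_mul]

theorem inv_add_mul_inv_mul_mul_mul_inv {P : Matrix ι ι K} {R : Matrix κ κ K}
    (G : Matrix ι κ K) (H : Matrix κ ι K) (hP : IsUnit P) (hR : IsUnit R)
    (hS : IsUnit (H * P * G + R)) (hA : IsUnit (P⁻¹ + G * R⁻¹ * H)) :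
    (P⁻¹ + G * R⁻¹ * H)⁻¹ * G * R⁻¹ = P * G * (H * P * G + R)⁻¹ := by
  set S := H * P * G + R
  set A := P⁻¹ + G * R⁻¹ * H
  have push : A * (P * G) = G * R⁻¹ * S := by
    simp only [A, S, Matrix.add_mul, Matrix.mul_add, Matrix.mul_assoc,
      nonsing_inv_mul_cancel_left _ _ ((isUnit_iff_isUnit_det P).mp hP),
      nonsing_inv_mul _ ((isUnit_iff_isUnit_det R).mp hR), Matrix.mul_one]
    abel
  calc A⁻¹ * G * R⁻¹ = A⁻¹ * (G * R⁻¹ * S) * S⁻¹ := by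
        simp only [← Matrix.mul_assoc,
          mul_nonsing_inv_cancel_right _ _ ((isUnit_iff_isUnit_det S).mp hS)]
    _ = P * G * S⁻¹ := by
        rw [← push, nonsing_inv_mul_cancel_left _ _ ((isUnit_iff_isUnit_det A).mp hA),
          Matrix.mul_assoc]

end CommRing

section Field

variable {K : Type*} [Field K] {ι : Type*} [Fintype ι] [DecidableEq ι]

theorem inv_smul_of_ne_zero {c : K} (hc : c ≠ 0) {M : Matrix ι ι K} (hM : IsUnit M) :
    (c • M)⁻¹ = c⁻¹ • M⁻¹ :=
  inv_smul' M (Units.mk0 c hc) ((isUnit_iff_isUnit_det M).mp hM)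

theorem smul_inv_smul {c : K} (hc : c ≠ 0) {M : Matrix ι ι K} (hM : IsUnit M) :
    c • (c • M)⁻¹ = M⁻¹ := by
  rw [inv_smul_of_ne_zero hc hM, smul_smul, mul_inv_cancel₀ hc, one_smul]

end Field

section Real

variable {ι κ : Type*} [Fintype ι] [Fintype κ] [DecidableEq ι] [DecidableEq κ]

theorem PosDef.mul_mul_transpose_of_isUnit {P F : Matrix ι ι ℝ} (hP : P.PosDef)
    (hF : IsUnit F) : (F * P * Fᵀ).PosDef := by
  simpa only [conjTranspose_eq_transpose_of_trivial] using
    hP.mul_mul_conjTranspose_same (vecMul_injective_iff_isUnit.mpr hF)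

theorem PosDef.kalman_update_information_form {P : Matrix ι ι ℝ} {R : Matrix κ κ ℝ}
    (hP : P.PosDef) (hR : R.PosDef) (H : Matrix κ ι ℝ) :
    (P⁻¹ + Hᵀ * R⁻¹ * H).PosDef ∧
      (1 - P * Hᵀ * (H * P * Hᵀ + R)⁻¹ * H) * P = (P⁻¹ + Hᵀ * R⁻¹ * H)⁻¹ ∧
      (P⁻¹ + Hᵀ * R⁻¹ * H)⁻¹ * Hᵀ * R⁻¹ = P * Hᵀ * (H * P * Hᵀ + R)⁻¹ := by
  have hA : (P⁻¹ + Hᵀ * R⁻¹ * H).PosDef :=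
    hP.inv.add_posSemidef (hR.inv.posSemidef.conjTranspose_mul_mul_same H)
  have hS : (H * P * Hᵀ + R).PosDef :=
    PosDef.posSemidef_add (hP.posSemidef.mul_mul_conjTranspose_same H) hR
  exact ⟨hA, one_sub_mul_inv_mul_mul_eq_inv_add _ _ hP.isUnit hR.isUnit hS.isUnit,
    inv_add_mul_inv_mul_mul_mul_inv _ _ hP.isUnit hR.isUnit hS.isUnit hA.isUnit⟩

end Real

end Matrix

theorem one_sub_mul_eq_mul_inv_of_one_div_eq {K : Type*} [Field K] {c η η' : K} (hc : c ≠ 0)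
    (hη : η ≠ 0) (hη' : η' ≠ 0) (h : 1 / η' = 1 / (c * η) + 1) :
    (1 - η') * η = η' * c⁻¹ := by
  field_simp at h ⊢
  linear_combination h

theorem fading_fisher_update_eq_smul {K : Type*} [Field K] {ι : Type*} [Fintype ι]
    [DecidableEq ι] {P F : Matrix ι ι K} (M : Matrix ι ι K) {α η η' : K} (hP : IsUnit P)
    (hF : IsUnit F) (hα : 1 + α ≠ 0) (hη : η ≠ 0) (hη' : η' ≠ 0)
    (hrec : 1 / η' = 1 / ((1 + α) * η) + 1) :
    (1 - η') • ((F⁻¹)ᵀ * (η • P⁻¹) * F⁻¹) + η' • M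
      = η' • (((1 + α) • (F * P * Fᵀ))⁻¹ + M) := by
  have hFPF : IsUnit (F * P * Fᵀ) := (hF.mul hP).mul ((isUnit_transpose F).mpr hF)
  rw [smul_add, Matrix.mul_smul, Matrix.smul_mul, transpose_inv_mul_inv_mul_inv, smul_smul,
    one_sub_mul_eq_mul_inv_of_one_div_eq hα hη hη' hrec, inv_smul_of_ne_zero hα hFPF, smul_smul]

theorem ekf_is_natural_gradient_in_trajectory_space_general
    (n m d : ℕ) (f : (Fin n → ℝ) → (Fin d → ℝ) → (Fin n → ℝ))
    (h : (Fin n → ℝ) → (Fin d → ℝ) → (Fin m → ℝ))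
    (R : Matrix (Fin m) (Fin m) ℝ) (hR : R.PosDef)
    (u : ℕ → (Fin d → ℝ)) (y : ℕ → (Fin m → ℝ))
    (α : ℕ → ℝ) (hα : ∀ t, 0 ≤ α (t + 1))
    (η : ℕ → ℝ) (hη0 : ∀ t, 0 < η t)
    (hηrec : ∀ t, 1 / η (t + 1) = 1 / ((1 + α (t + 1)) * η t) + 1)
    -- the pure fading-memory extended Kalman filter sequences
    (s : ℕ → (Fin n → ℝ)) (P : ℕ → Matrix (Fin n) (Fin n) ℝ)
    (spred : ℕ → (Fin n → ℝ)) (F : ℕ → Matrix (Fin n) (Fin n) ℝ)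
    (Ppred : ℕ → Matrix (Fin n) (Fin n) ℝ) (yhat : ℕ → (Fin m → ℝ))
    (H : ℕ → Matrix (Fin m) (Fin n) ℝ) (K : ℕ → Matrix (Fin n) (Fin m) ℝ)
    (hP0 : (P 0).PosDef)
    (hspred : ∀ t, spred (t + 1) = f (s t) (u (t + 1)))
    (hF : ∀ t, F t = jacobian (fun x => f x (u (t + 1))) (s t))
    (hPpred : ∀ t, Ppred (t + 1) = (1 + α (t + 1)) • (F t * P t * (F t)ᵀ))
    (hyhat : ∀ t, yhat (t + 1) = h (spred (t + 1)) (u (t + 1)))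
    (hH : ∀ t, H (t + 1) = jacobian (fun x => h x (u (t + 1))) (spred (t + 1)))
    (hK : ∀ t, K (t + 1) =
      Ppred (t + 1) * (H (t + 1))ᵀ * (H (t + 1) * Ppred (t + 1) * (H (t + 1))ᵀ + R)⁻¹)
    (hPrec : ∀ t, P (t + 1) = (1 - K (t + 1) * H (t + 1)) * Ppred (t + 1))
    (hsrec : ∀ t, s (t + 1) = spred (t + 1) + (K (t + 1)).mulVec (y (t + 1) - yhat (t + 1)))
    -- the online natural gradient sequences
    (σ : ℕ → (Fin n → ℝ)) (J : ℕ → Matrix (Fin n) (Fin n) ℝ)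
    (σpred : ℕ → (Fin n → ℝ)) (Φ : ℕ → Matrix (Fin n) (Fin n) ℝ)
    (Htil : ℕ → Matrix (Fin m) (Fin n) ℝ)
    (hσ0 : σ 0 = s 0) (hJ0 : J 0 = η 0 • (P 0)⁻¹)
    (hσpred : ∀ t, σpred (t + 1) = f (σ t) (u (t + 1)))
    (hΦ : ∀ t, Φ t = jacobian (fun x => f x (u (t + 1))) (σ t))
    (hHtil : ∀ t, Htil (t + 1) = jacobian (fun x => h x (u (t + 1))) (σpred (t + 1)))
    (hJrec : ∀ t, J (t + 1) =
      (1 - η (t + 1)) • (((Φ t)⁻¹)ᵀ * J t * (Φ t)⁻¹)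
        + η (t + 1) • ((Htil (t + 1))ᵀ * R⁻¹ * Htil (t + 1)))
    (hσrec : ∀ t, σ (t + 1) = σpred (t + 1) +
      η (t + 1) • ((J (t + 1))⁻¹ * (Htil (t + 1))ᵀ * R⁻¹).mulVec
        (y (t + 1) - h (σpred (t + 1)) (u (t + 1))))
    -- invertibility of the transition Jacobians
    (hFinv : ∀ t, IsUnit (F t)) :
    ∀ t, σ t = s t ∧ (P t).PosDef ∧ (J t).PosDef ∧
      IsUnit (P t) ∧ IsUnit (J t) ∧ P t = η t • (J t)⁻¹ := by
  have key : ∀ t, σ t = s t ∧ (P t).PosDef ∧ J t = η t • (P t)⁻¹ := by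
    intro t
    induction t with
    | zero => exact ⟨hσ0, hP0, hJ0⟩
    | succ t ih =>
      obtain ⟨hσs, hPt, hJt⟩ := ih
      have hc : 0 < 1 + α (t + 1) := by linarith [hα t]
      have hpred : σpred (t + 1) = spred (t + 1) := by rw [hσpred t, hspred t, hσs]
      have hΦF : Φ t = F t := by rw [hΦ t, hF t, hσs]
      have hHH : Htil (t + 1) = H (t + 1) := by rw [hHtil t, hH t, hpred]
      have hPp : (Ppred (t + 1)).PosDef :=
        hPpred t ▸ (hPt.mul_mul_transpose_of_isUnit (hFinv t)).smul hc
      obtain ⟨hA, hPA, hgain⟩ := hPp.kalman_update_information_form hR (H (t + 1))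
      rw [← hK t, ← hPrec t] at hPA
      have hPnew : (P (t + 1)).PosDef := hPA ▸ hA.inv
      have hJA : J (t + 1) = η (t + 1) • (P (t + 1))⁻¹ := by
        rw [hJrec t, hΦF, hHH, hJt, hPA, nonsing_inv_nonsing_inv _ hA.det_pos.ne'.isUnit,
          fading_fisher_update_eq_smul _ hPt.isUnit (hFinv t) hc.ne' (hη0 t).ne'
            (hη0 (t + 1)).ne' (hηrec t), hPpred t]
      refine ⟨?_, hPnew, hJA⟩
      rw [hσrec t, hsrec t, hpred, hHH, hyhat t, hJA, ← smul_mulVec, ← Matrix.smul_mul,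
        ← Matrix.smul_mul, smul_inv_smul (hη0 (t + 1)).ne' hPnew.inv.isUnit,
        nonsing_inv_nonsing_inv _ hPnew.det_pos.ne'.isUnit, hPA, hgain, hK t]
  intro t
  obtain ⟨hσs, hPt, hJt⟩ := key t
  have hJpos : (J t).PosDef := hJt ▸ hPt.inv.smul (hη0 t)
  refine ⟨hσs, hPt, hJpos, hPt.isUnit, hJpos.isUnit, ?_⟩
  rw [hJt, smul_inv_smul (hη0 t).ne' hPt.inv.isUnit,
    nonsing_inv_nonsing_inv _ hPt.det_pos.ne'.isUnit]

/-- The pure fading-memory extended Kalman filter coincides with the online natural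
gradient on trajectory space (expressed at each time in the chart of the current state),
for the Gaussian observation model `y_t = h(s_t, u_t) + N(0, R)`. -/
theorem ekf_is_natural_gradient_in_trajectory_space
    (n m d : ℕ) (hn : 0 < n) (hm : 0 < m) (hd : 0 < d)
    (f : (Fin n → ℝ) → (Fin d → ℝ) → (Fin n → ℝ))
    (h : (Fin n → ℝ) → (Fin d → ℝ) → (Fin m → ℝ))
    (hf : ∀ u, Differentiable ℝ (fun s => f s u))
    (hh : ∀ u, Differentiable ℝ (fun s => h s u))
    (R : Matrix (Fin m) (Fin m) ℝ) (hR : R.PosDef)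
    (u : ℕ → (Fin d → ℝ)) (y : ℕ → (Fin m → ℝ))
    (α : ℕ → ℝ) (hα : ∀ t, 0 ≤ α (t + 1))
    (η : ℕ → ℝ) (hη0 : ∀ t, 0 < η t) (hη1 : ∀ t, η t < 1)
    (hηrec : ∀ t, 1 / η (t + 1) = 1 / ((1 + α (t + 1)) * η t) + 1)
    -- the pure fading-memory extended Kalman filter sequences
    (s : ℕ → (Fin n → ℝ)) (P : ℕ → Matrix (Fin n) (Fin n) ℝ)
    (spred : ℕ → (Fin n → ℝ)) (F : ℕ → Matrix (Fin n) (Fin n) ℝ)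
    (Ppred : ℕ → Matrix (Fin n) (Fin n) ℝ) (yhat : ℕ → (Fin m → ℝ))
    (H : ℕ → Matrix (Fin m) (Fin n) ℝ) (K : ℕ → Matrix (Fin n) (Fin m) ℝ)
    (hP0 : (P 0).PosDef)
    (hspred : ∀ t, spred (t + 1) = f (s t) (u (t + 1)))
    (hF : ∀ t, F t = jacobian (fun x => f x (u (t + 1))) (s t))
    (hPpred : ∀ t, Ppred (t + 1) = (1 + α (t + 1)) • (F t * P t * (F t)ᵀ))
    (hyhat : ∀ t, yhat (t + 1) = h (spred (t + 1)) (u (t + 1)))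
    (hH : ∀ t, H (t + 1) = jacobian (fun x => h x (u (t + 1))) (spred (t + 1)))
    (hK : ∀ t, K (t + 1) =
      Ppred (t + 1) * (H (t + 1))ᵀ * (H (t + 1) * Ppred (t + 1) * (H (t + 1))ᵀ + R)⁻¹)
    (hPrec : ∀ t, P (t + 1) = (1 - K (t + 1) * H (t + 1)) * Ppred (t + 1))
    (hsrec : ∀ t, s (t + 1) = spred (t + 1) + (K (t + 1)).mulVec (y (t + 1) - yhat (t + 1)))
    -- the online natural gradient sequences
    (σ : ℕ → (Fin n → ℝ)) (J : ℕ → Matrix (Fin n) (Fin n) ℝ)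
    (σpred : ℕ → (Fin n → ℝ)) (Φ : ℕ → Matrix (Fin n) (Fin n) ℝ)
    (Htil : ℕ → Matrix (Fin m) (Fin n) ℝ)
    (hσ0 : σ 0 = s 0) (hJ0 : J 0 = η 0 • (P 0)⁻¹)
    (hσpred : ∀ t, σpred (t + 1) = f (σ t) (u (t + 1)))
    (hΦ : ∀ t, Φ t = jacobian (fun x => f x (u (t + 1))) (σ t))
    (hHtil : ∀ t, Htil (t + 1) = jacobian (fun x => h x (u (t + 1))) (σpred (t + 1)))
    (hJrec : ∀ t, J (t + 1) =
      (1 - η (t + 1)) • (((Φ t)⁻¹)ᵀ * J t * (Φ t)⁻¹)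
        + η (t + 1) • ((Htil (t + 1))ᵀ * R⁻¹ * Htil (t + 1)))
    (hσrec : ∀ t, σ (t + 1) = σpred (t + 1) +
      η (t + 1) • ((J (t + 1))⁻¹ * (Htil (t + 1))ᵀ * R⁻¹).mulVec
        (y (t + 1) - h (σpred (t + 1)) (u (t + 1))))
    -- invertibility of the transition Jacobians
    (hFinv : ∀ t, IsUnit (F t)) (hΦinv : ∀ t, IsUnit (Φ t)) :
    ∀ t, σ t = s t ∧ (P t).PosDef ∧ (J t).PosDef ∧
      IsUnit (P t) ∧ IsUnit (J t) ∧ P t = η t • (J t)⁻¹ :=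
  ekf_is_natural_gradient_in_trajectory_space_general n m d f h R hR u y α hα η hη0 hηrec s P spred
    F Ppred yhat H K hP0 hspred hF hPpred hyhat hH hK hPrec hsrec σ J σpred Φ Htil hσ0 hJ0 hσpred hΦ
    hHtil hJrec hσrec hFinv
end

section
/- Let h : ℝⁿ → ℝᵐ be differentiable at s₀ ∈ ℝⁿ with Jacobian H at s₀, let R be an m×m real symmetric positive definite matrix, y ∈ ℝᵐ, and let P be an n×n real symmetric positive definite matrix. Define ℓ : ℝⁿ → ℝ by ℓ(s) := −(1/2) (y − h(s))ᵀ R⁻¹ (y − h(s)), define K := P Hᵀ (H P Hᵀ + R)⁻¹ and P₊ := (I − K H) P. Then ℓ is differentiable at s₀ with gradient (as a column vector) equal to Hᵀ R⁻¹ (y − h(s₀)), and the Kalman state update satisfies s₀ + K (y − h(s₀)) = s₀ + P₊ ∇ℓ(s₀). -/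
/-!
The gradient of `ℓ` comes from the chain rule: for symmetric `A` the quadratic form
`u ↦ uᵀ A u` has derivative `v ↦ 2 (A u)ᵀ v`, so `∇ℓ(s₀) = Hᵀ R⁻¹ (y - h(s₀))`.
The update identity is `K = P₊ Hᵀ R⁻¹`, which follows from `K (H P Hᵀ + R) = P Hᵀ`:
`(I - K H) P Hᵀ = P Hᵀ - K H P Hᵀ = K R`.
-/

open Matrix

namespace Matrix

variable {ι κ : Type*}

theorem PosDef.isSymm {A : Matrix ι ι ℝ} (hA : A.PosDef) : A.IsSymm :=
  (conjTranspose_eq_transpose_of_trivial A).symm.trans hA.isHermitian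

variable [Fintype ι] [Fintype κ]

theorem IsSymm.dotProduct_mulVec_comm {A : Matrix ι ι ℝ} (hA : A.IsSymm) (u w : ι → ℝ) :
    u ⬝ᵥ A *ᵥ w = w ⬝ᵥ A *ᵥ u := by
  rw [← dotProduct_transpose_mulVec, hA.eq]

theorem IsSymm.dotProduct_mulVec_mulVec {A : Matrix ι ι ℝ} (hA : A.IsSymm) (H : Matrix ι κ ℝ)
    (r : ι → ℝ) (v : κ → ℝ) : r ⬝ᵥ A *ᵥ H *ᵥ v = (Hᵀ * A) *ᵥ r ⬝ᵥ v := by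
  rw [mulVec_mulVec, ← dotProduct_transpose_mulVec, transpose_mul, hA.eq, dotProduct_comm]

theorem PosSemidef.mul_mul_transpose_add {P : Matrix κ κ ℝ} (hP : P.PosSemidef)
    (H : Matrix ι κ ℝ) {R : Matrix ι ι ℝ} (hR : R.PosDef) : (H * P * Hᵀ + R).PosDef := by
  have hHPH : (H * P * Hᵀ).PosSemidef := by
    simpa only [conjTranspose_eq_transpose_of_trivial] using hP.mul_mul_conjTranspose_same H
  exact PosDef.posSemidef_add hHPH hR

theorem one_sub_mul_mul_eq_mul {α : Type*} [Ring α] [DecidableEq κ] {K : Matrix κ ι α}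
    {H : Matrix ι κ α} {B : Matrix κ ι α} {R : Matrix ι ι α} (hK : K * (H * B + R) = B) :
    (1 - K * H) * B = K * R := by
  rw [Matrix.sub_mul, Matrix.one_mul, Matrix.mul_assoc]
  nth_rewrite 1 [← hK]
  rw [Matrix.mul_add, add_sub_cancel_left]

end Matrix

section QuadraticForm

variable {ι E : Type*} [Fintype ι] [DecidableEq ι] [NormedAddCommGroup E] [NormedSpace ℝ E]

theorem HasFDerivAt.dotProduct_mulVec_self {A : Matrix ι ι ℝ} (hA : A.IsSymm)
    {f : E → ι → ℝ} {f' : E →L[ℝ] ι → ℝ} {x : E} (hf : HasFDerivAt f f' x) :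
    HasFDerivAt (fun z => f z ⬝ᵥ A *ᵥ f z)
      ((2 : ℝ) • ((toLinearMap₂' ℝ A).toContinuousBilinearMap (f x)).comp f') x := by
  have h := ((toLinearMap₂' ℝ A).toContinuousBilinearMap).hasFDerivAt_of_bilinear hf hf
  simp only [LinearMap.toContinuousBilinearMap_apply, toLinearMap₂'_apply'] at h
  refine h.congr_fderiv (ContinuousLinearMap.ext fun v => ?_)
  simp [two_smul, toLinearMap₂'_apply', hA.dotProduct_mulVec_comm (f' v)]

theorem HasFDerivAt.neg_half_dotProduct_mulVec_sub_self {A : Matrix ι ι ℝ} (hA : A.IsSymm)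
    (y : ι → ℝ) {h : E → ι → ℝ} {h' : E →L[ℝ] ι → ℝ} {x : E} (hh : HasFDerivAt h h' x) :
    HasFDerivAt (fun z => -(1 / 2) * ((y - h z) ⬝ᵥ A *ᵥ (y - h z)))
      (((toLinearMap₂' ℝ A).toContinuousBilinearMap (y - h x)).comp h') x := by
  refine ((hh.const_sub y).dotProduct_mulVec_self hA).const_mul _ |>.congr_fderiv ?_
  ext v
  simp

end QuadraticForm

/-- The Kalman observation update of the state is a gradient ascent step on the
observation log-likelihood `ℓ(s) = -(1/2)(y - h(s))ᵀ R⁻¹ (y - h(s))`, preconditioned by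
the posterior covariance matrix `P₊ = (I - K H) P`. -/
theorem kalman_update_is_preconditioned_gradient_step
    (n m : ℕ) (h : (Fin n → ℝ) → (Fin m → ℝ)) (s₀ : Fin n → ℝ)
    (H : Matrix (Fin m) (Fin n) ℝ)
    (hh : HasFDerivAt h (LinearMap.toContinuousLinearMap H.mulVecLin) s₀)
    (R : Matrix (Fin m) (Fin m) ℝ) (hR : R.PosDef)
    (y : Fin m → ℝ)
    (P : Matrix (Fin n) (Fin n) ℝ) (hP : P.PosDef)
    (ℓ : (Fin n → ℝ) → ℝ)
    (hℓ : ℓ = fun s => -(1 / 2) * ((y - h s) ⬝ᵥ R⁻¹.mulVec (y - h s)))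
    (K : Matrix (Fin n) (Fin m) ℝ) (hK : K = P * Hᵀ * (H * P * Hᵀ + R)⁻¹)
    (Pplus : Matrix (Fin n) (Fin n) ℝ) (hPplus : Pplus = (1 - K * H) * P) :
    DifferentiableAt ℝ ℓ s₀ ∧
      (∀ v, fderiv ℝ ℓ s₀ v = ((Hᵀ * R⁻¹).mulVec (y - h s₀)) ⬝ᵥ v) ∧
      s₀ + K.mulVec (y - h s₀) = s₀ + Pplus.mulVec ((Hᵀ * R⁻¹).mulVec (y - h s₀)) := by
  have hRinv : R⁻¹.IsSymm := hR.isSymm.inv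
  have hℓ' : HasFDerivAt ℓ (((toLinearMap₂' ℝ R⁻¹).toContinuousBilinearMap (y - h s₀)).comp
      (LinearMap.toContinuousLinearMap H.mulVecLin)) s₀ :=
    hℓ ▸ hh.neg_half_dotProduct_mulVec_sub_self hRinv y
  have hS : IsUnit (H * P * Hᵀ + R).det :=
    (PosSemidef.mul_mul_transpose_add hP.posSemidef H hR).det_pos.ne'.isUnit
  have hKS : K * (H * (P * Hᵀ) + R) = P * Hᵀ := by
    rw [hK, ← Matrix.mul_assoc H, nonsing_inv_mul_cancel_right _ _ hS]
  have hgain : K = Pplus * (Hᵀ * R⁻¹) :=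
    calc K = K * R * R⁻¹ := (mul_nonsing_inv_cancel_right _ _ hR.det_pos.ne'.isUnit).symm
      _ = (1 - K * H) * (P * Hᵀ) * R⁻¹ := by rw [one_sub_mul_mul_eq_mul hKS]
      _ = Pplus * (Hᵀ * R⁻¹) := by simp only [hPplus, Matrix.mul_assoc]
  refine ⟨hℓ'.differentiableAt, fun v => ?_, by rw [hgain, mulVec_mulVec]⟩
  rw [hℓ'.fderiv, ContinuousLinearMap.comp_apply, LinearMap.toContinuousBilinearMap_apply,
    toLinearMap₂'_apply', LinearMap.coe_toContinuousLinearMap', mulVecLin_apply]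
  exact hRinv.dotProduct_mulVec_mulVec H (y - h s₀) v
end

section
/- Let P be an n×n real symmetric positive definite matrix, R an m×m real symmetric positive definite matrix, and H an m×n real matrix. Set K := P Hᵀ (H P Hᵀ + R)⁻¹. Then the matrix (I − K H) P is symmetric positive definite. -/
/-!
By the Woodbury identity the posterior covariance is the inverse of the information matrix
`P⁻¹ + Hᵀ R⁻¹ H`, a positive definite matrix plus a positive semidefinite one; inverses of
positive definite matrices are positive definite.
-/

open Matrix

theorem Matrix.kalman_posterior_eq_inv_add {𝕜 m n : Type*} [CommRing 𝕜]
    [Fintype m] [DecidableEq m] [Fintype n] [DecidableEq n]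
    {P : Matrix n n 𝕜} {R : Matrix m m 𝕜} (U : Matrix n m 𝕜) (V : Matrix m n 𝕜)
    (hP : IsUnit P) (hR : IsUnit R) (hS : IsUnit (V * P * U + R)) :
    (1 - P * U * (V * P * U + R)⁻¹ * V) * P = (P⁻¹ + U * R⁻¹ * V)⁻¹ := by
  have hPP : P⁻¹⁻¹ = P := nonsing_inv_nonsing_inv P ((isUnit_iff_isUnit_det P).1 hP)
  have hRR : R⁻¹⁻¹ = R := nonsing_inv_nonsing_inv R ((isUnit_iff_isUnit_det R).1 hR)
  rw [add_mul_mul_inv_eq_sub P⁻¹ U R⁻¹ V (isUnit_nonsing_inv_iff.2 hP)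
    (isUnit_nonsing_inv_iff.2 hR) (by rwa [hPP, hRR, add_comm]), hPP, hRR, add_comm R]
  noncomm_ring

theorem Matrix.PosDef.kalman_posterior {𝕜 m n : Type*} [Field 𝕜] [PartialOrder 𝕜]
    [StarRing 𝕜] [StarOrderedRing 𝕜] [Fintype m] [DecidableEq m] [Fintype n] [DecidableEq n]
    {P : Matrix n n 𝕜} {R : Matrix m m 𝕜} (hP : P.PosDef) (hR : R.PosDef) (H : Matrix m n 𝕜) :
    ((1 - P * Hᴴ * (H * P * Hᴴ + R)⁻¹ * H) * P).PosDef := by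
  have hS : (H * P * Hᴴ + R).PosDef :=
    PosDef.posSemidef_add (hP.posSemidef.mul_mul_conjTranspose_same H) hR
  have hInfo : (P⁻¹ + Hᴴ * R⁻¹ * H).PosDef :=
    hP.inv.add_posSemidef (by simpa using hR.inv.posSemidef.conjTranspose_mul_mul_same H)
  rw [kalman_posterior_eq_inv_add _ _ hP.isUnit hR.isUnit hS.isUnit]
  exact hInfo.inv

/-- The Kalman observation update preserves positive definiteness of the covariance:
the posterior covariance `(I - K H) P` is symmetric positive definite. -/
theorem kalman_posterior_covariance_posDef
    (n m : ℕ) (P : Matrix (Fin n) (Fin n) ℝ) (hP : P.PosDef)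
    (R : Matrix (Fin m) (Fin m) ℝ) (hR : R.PosDef)
    (H : Matrix (Fin m) (Fin n) ℝ)
    (K : Matrix (Fin n) (Fin m) ℝ) (hK : K = P * Hᵀ * (H * P * Hᵀ + R)⁻¹) :
    ((1 - K * H) * P).PosDef := by
  rw [hK, ← conjTranspose_eq_transpose_of_trivial]
  exact hP.kalman_posterior hR H
end

section
/- Let n, m be positive integers and fix t₀ ∈ ℝ. Let F, H, R be matrix-valued functions of t (n×n, m×n, and m×m respectively) with R(t₀) invertible, let η : ℝ → ℝ be differentiable at t₀ with η(t₀) ≠ 0, and let J : ℝ → (n×n real matrices) be such that J(t) is invertible in a neighborhood of t₀ and J has derivative −F(t₀)ᵀ J(t₀) − J(t₀) F(t₀) − η(t₀) J(t₀) + η(t₀) H(t₀)ᵀ R(t₀)⁻¹ H(t₀) at t₀. Define P(t) := η(t) · J(t)⁻¹. Then P has derivative F(t₀) P(t₀) + P(t₀) F(t₀)ᵀ + Q − P(t₀) H(t₀)ᵀ R(t₀)⁻¹ H(t₀) P(t₀) at t₀, where Q := (η(t₀) + η'(t₀)/η(t₀)) P(t₀). -/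
/-!
Inverting a differentiable matrix path gives `d(J⁻¹) = -J⁻¹ J̇ J⁻¹`: for `t` near `t₀` one has
`J(t)⁻¹ - J(t₀)⁻¹ = -J(t)⁻¹ (J(t) - J(t₀)) J(t₀)⁻¹`, and inversion is continuous at `J(t₀)`.
Hence `Ṗ = η̇ J⁻¹ - η J⁻¹ J̇ J⁻¹`. Conjugating the Fisher dynamics by `J⁻¹`, the transport terms
become `F P + P Fᵀ`, the decay `-ηJ` contributes `η P`, the natural-gradient update contributes
`-P HᵀR⁻¹H P`, and `η̇ J⁻¹ = (η̇/η) P` supplies the rest of the fading-memory noise.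
-/

open Matrix Filter

open scoped Topology

section Calculus

variable {𝕜 : Type*} [NontriviallyNormedField 𝕜] {m n : Type*}

theorem tendsto_slope_iff_forall_hasDerivAt_apply {A : 𝕜 → Matrix m n 𝕜} {A' : Matrix m n 𝕜}
    {t₀ : 𝕜} :
    Tendsto (slope A t₀) (𝓝[≠] t₀) (𝓝 A') ↔
      ∀ i j, HasDerivAt (fun t => A t i j) (A' i j) t₀ := by
  simp only [hasDerivAt_iff_tendsto_slope]
  exact tendsto_pi_nhds.trans (forall_congr' fun i => tendsto_pi_nhds)

theorem hasDerivAt_smul_apply {c : 𝕜 → 𝕜} {c' : 𝕜} {M : 𝕜 → Matrix m n 𝕜}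
    {M' : Matrix m n 𝕜} {t₀ : 𝕜} (hc : HasDerivAt c c' t₀)
    (hM : ∀ i j, HasDerivAt (fun t => M t i j) (M' i j) t₀) (i : m) (j : n) :
    HasDerivAt (fun t => (c t • M t) i j) ((c' • M t₀ + c t₀ • M') i j) t₀ :=
  hc.fun_mul (hM i j)

theorem Matrix.hasDerivAt_inv_apply [Fintype n] [DecidableEq n] {A : 𝕜 → Matrix n n 𝕜}
    {A' : Matrix n n 𝕜} {t₀ : 𝕜} (hA : ∀ i j, HasDerivAt (fun t => A t i j) (A' i j) t₀)
    (hA₀ : IsUnit (A t₀)) :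
    ∀ i j, HasDerivAt (fun t => (A t)⁻¹ i j) ((-((A t₀)⁻¹ * A' * (A t₀)⁻¹)) i j) t₀ := by
  have hcont : ContinuousAt A t₀ :=
    continuousAt_pi.2 fun i => continuousAt_pi.2 fun j => (hA i j).continuousAt
  have hdet : (A t₀).det ≠ 0 := ((isUnit_iff_isUnit_det _).mp hA₀).ne_zero
  have hinv : Tendsto (fun t => (A t)⁻¹) (𝓝 t₀) (𝓝 (A t₀)⁻¹) :=
    (continuousAt_matrix_inv _
      (by simpa [Ring.inverse_eq_inv'] using continuousAt_inv₀ hdet)).comp hcont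
  have hunit : ∀ᶠ t in 𝓝 t₀, IsUnit (A t) :=
    ((continuous_id.matrix_det.continuousAt.comp hcont).eventually_ne hdet).mono fun t ht =>
      (isUnit_iff_isUnit_det _).mpr (isUnit_iff_ne_zero.mpr ht)
  have hslope : ∀ᶠ t in 𝓝[≠] t₀,
      slope (fun t => (A t)⁻¹) t₀ t = -((A t)⁻¹ * slope A t₀ t * (A t₀)⁻¹) := by
    filter_upwards [nhdsWithin_le_nhds hunit] with t ht
    rw [slope_def_module, slope_def_module, inv_sub_inv (iff_of_true ht hA₀), ← neg_sub (A t),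
      Matrix.mul_smul, Matrix.smul_mul, Matrix.mul_neg, Matrix.neg_mul, smul_neg]
  rw [← tendsto_slope_iff_forall_hasDerivAt_apply] at hA ⊢
  refine Tendsto.congr' (EventuallyEq.symm hslope) ?_
  exact ((hinv.mono_left nhdsWithin_le_nhds).mul hA |>.mul tendsto_const_nhds).neg

end Calculus

theorem smul_inv_deriv_eq_riccati {K : Type*} [Field K] {n : Type*} [Fintype n] [DecidableEq n]
    {J F S : Matrix n n K} (hJ : IsUnit J) {η η' : K} (hη : η ≠ 0) :
    η' • J⁻¹ + η • -(J⁻¹ * (-Fᵀ * J - J * F - η • J + η • S) * J⁻¹) =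
      F * (η • J⁻¹) + η • J⁻¹ * Fᵀ + (η + η' / η) • (η • J⁻¹) - η • J⁻¹ * S * (η • J⁻¹) := by
  have hJJ : J⁻¹ * J = 1 := nonsing_inv_mul J ((isUnit_iff_isUnit_det J).mp hJ)
  have hJJ' : J * J⁻¹ = 1 := mul_nonsing_inv J ((isUnit_iff_isUnit_det J).mp hJ)
  have hflow : J⁻¹ * (-Fᵀ * J - J * F - η • J + η • S) * J⁻¹ =
      -(J⁻¹ * Fᵀ) - F * J⁻¹ - η • J⁻¹ + η • (J⁻¹ * S * J⁻¹) := by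
    simp only [Matrix.mul_add, Matrix.mul_sub, Matrix.add_mul, Matrix.sub_mul, Matrix.mul_neg,
      Matrix.neg_mul, Matrix.mul_smul, Matrix.smul_mul, Matrix.mul_assoc, hJJ', Matrix.mul_one]
    simp only [← Matrix.mul_assoc, hJJ, Matrix.one_mul]
  rw [hflow]
  simp only [Matrix.smul_mul, Matrix.mul_smul]
  match_scalars <;> field_simp
  ring

theorem natural_gradient_fisher_gives_kalman_bucy_riccati_general
    (n m : ℕ) (t₀ : ℝ)
    (F : ℝ → Matrix (Fin n) (Fin n) ℝ)
    (H : ℝ → Matrix (Fin m) (Fin n) ℝ)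
    (R : ℝ → Matrix (Fin m) (Fin m) ℝ)
    (η : ℝ → ℝ) (hη : DifferentiableAt ℝ η t₀) (hη0 : η t₀ ≠ 0)
    (J : ℝ → Matrix (Fin n) (Fin n) ℝ)
    (hJinv : ∀ᶠ t in nhds t₀, IsUnit (J t))
    (hJ : ∀ i j, HasDerivAt (fun t => J t i j)
      ((-(F t₀)ᵀ * J t₀ - J t₀ * F t₀ - η t₀ • J t₀
          + η t₀ • ((H t₀)ᵀ * (R t₀)⁻¹ * H t₀)) i j) t₀)
    (P : ℝ → Matrix (Fin n) (Fin n) ℝ) (hP : P = fun t => η t • (J t)⁻¹)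
    (Q : Matrix (Fin n) (Fin n) ℝ) (hQ : Q = (η t₀ + deriv η t₀ / η t₀) • P t₀) :
    ∀ i j, HasDerivAt (fun t => P t i j)
      ((F t₀ * P t₀ + P t₀ * (F t₀)ᵀ + Q
          - P t₀ * (H t₀)ᵀ * (R t₀)⁻¹ * H t₀ * P t₀) i j) t₀ := by
  subst hP hQ
  have hJ₀ : IsUnit (J t₀) := hJinv.self_of_nhds
  have hP' := hasDerivAt_smul_apply hη.hasDerivAt (Matrix.hasDerivAt_inv_apply hJ hJ₀)
  rw [smul_inv_deriv_eq_riccati hJ₀ hη0] at hP'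
  simpa only [Matrix.mul_assoc] using hP'

/-- The core continuous-time computation: if the Fisher matrix `J(t)` (expressed in the
chart of the current state) evolves by the transport term `-FᵀJ - JF` plus the
natural-gradient update `-ηJ + η HᵀR⁻¹H`, then `P = η J⁻¹` satisfies the Kalman–Bucy
Riccati equation `Ṗ = F P + P Fᵀ + Q - P HᵀR⁻¹H P` with fading-memory process noise
`Q = (η + η̇/η) P`. (Derivatives of matrix-valued functions are taken entrywise.) -/
theorem natural_gradient_fisher_gives_kalman_bucy_riccati
    (n m : ℕ) (hn : 0 < n) (hm : 0 < m) (t₀ : ℝ)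
    (F : ℝ → Matrix (Fin n) (Fin n) ℝ)
    (H : ℝ → Matrix (Fin m) (Fin n) ℝ)
    (R : ℝ → Matrix (Fin m) (Fin m) ℝ) (hR : IsUnit (R t₀))
    (η : ℝ → ℝ) (hη : DifferentiableAt ℝ η t₀) (hη0 : η t₀ ≠ 0)
    (J : ℝ → Matrix (Fin n) (Fin n) ℝ)
    (hJinv : ∀ᶠ t in nhds t₀, IsUnit (J t))
    (hJ : ∀ i j, HasDerivAt (fun t => J t i j)
      ((-(F t₀)ᵀ * J t₀ - J t₀ * F t₀ - η t₀ • J t₀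
          + η t₀ • ((H t₀)ᵀ * (R t₀)⁻¹ * H t₀)) i j) t₀)
    (P : ℝ → Matrix (Fin n) (Fin n) ℝ) (hP : P = fun t => η t • (J t)⁻¹)
    (Q : Matrix (Fin n) (Fin n) ℝ) (hQ : Q = (η t₀ + deriv η t₀ / η t₀) • P t₀) :
    ∀ i j, HasDerivAt (fun t => P t i j)
      ((F t₀ * P t₀ + P t₀ * (F t₀)ᵀ + Q
          - P t₀ * (H t₀)ᵀ * (R t₀)⁻¹ * H t₀ * P t₀) i j) t₀ :=
  natural_gradient_fisher_gives_kalman_bucy_riccati_general n m t₀ F H R η hη hη0 J hJinv hJ P hP Q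
    hQ
end
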